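/- In the monoid G⁺_{m,n} = ⟨ s, t₁,…,t_m, u₁,…,u_n | [s,t₁,…,t_m], [s,u₁,…,u_n], [t_i,u_j] ⟩_mo, the element Δ = s·t₁⋯t_m·u₁⋯u_n is a fundamental element: for each generator x there exists Δ_x with Δ = x·Δ_x = Δ_x·x (with respect to a suitable permutation of the generators). -/

import Mathlib

/-- Generators of the monoid G⁺_{m,n}: s, t₁,…,t_m, u₁,…,u_n. -/
inductive GGen (m n : ℕ) : Type
  | s : GGen m n
  | t : Fin m → GGen m n
  | u : Fin n → GGen m n
deriving DecidableEq

/-- The word s·t₁⋯t_m. -/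
def wordT (m n : ℕ) : FreeMonoid (GGen m n) :=
  FreeMonoid.ofList (GGen.s :: List.ofFn (fun i : Fin m => GGen.t i))

/-- The word s·u₁⋯u_n. -/
def wordU (m n : ℕ) : FreeMonoid (GGen m n) :=
  FreeMonoid.ofList (GGen.s :: List.ofFn (fun j : Fin n => GGen.u j))

/-- The defining relations: the cyclic relations [s,t₁,…,t_m] and [s,u₁,…,u_n]
(all cyclic rotations of the corresponding words are equal) and the commutation
relations t_i·u_j = u_j·t_i. -/
inductive GRel (m n : ℕ) : FreeMonoid (GGen m n) → FreeMonoid (GGen m n) → Prop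
  | cycT (j : ℕ) : GRel m n (wordT m n)
      (FreeMonoid.ofList ((FreeMonoid.toList (wordT m n)).rotate j))
  | cycU (j : ℕ) : GRel m n (wordU m n)
      (FreeMonoid.ofList ((FreeMonoid.toList (wordU m n)).rotate j))
  | comm (i : Fin m) (j : Fin n) :
      GRel m n (FreeMonoid.of (GGen.t i) * FreeMonoid.of (GGen.u j))
               (FreeMonoid.of (GGen.u j) * FreeMonoid.of (GGen.t i))

/-- The monoid G⁺_{m,n}. -/
abbrev GMonoid (m n : ℕ) : Type := (conGen (GRel m n)).Quotient

/-- The image of a generator in G⁺_{m,n}. -/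
def gmk {m n : ℕ} (x : GGen m n) : GMonoid m n :=
  (conGen (GRel m n)).mk' (FreeMonoid.of x)

/-- The element Δ = s·t₁⋯t_m·u₁⋯u_n. -/
def gDelta (m n : ℕ) : GMonoid m n :=
  (conGen (GRel m n)).mk' (FreeMonoid.ofList
    (GGen.s :: ((List.ofFn fun i : Fin m => GGen.t i) ++ List.ofFn fun j : Fin n => GGen.u j)))

/-!
Write `T = t₁⋯t_m` and `U = u₁⋯u_n`, so that `Δ = sTU = sUT` because `T` and `U` commute.
Since all rotations of `s·t₁⋯t_m` have the same product, each of its letters `x` satisfies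
`sT = x·d = d·x` for one `d`. Such an `x` also commutes with `U` (by the commutation relations
for `tᵢ`, by the rotation `sU = Us` for `s`), so `Δ = x·(dU) = (dU)·x`. The letters `uⱼ` are
handled symmetrically from `Δ = (sU)T`, and `σ` can be taken to be the identity.
-/

section BalancedDvd

variable {M : Type*} [Monoid M]

def BalancedDvd (x a : M) : Prop :=
  ∃ d, a = x * d ∧ a = d * x

theorem BalancedDvd.mul_right {x a b : M} (h : BalancedDvd x a)
    (hb : Commute x b) : BalancedDvd x (a * b) := by
  obtain ⟨d, hxd, hdx⟩ := h
  refine ⟨d * b, by rw [hxd, mul_assoc], ?_⟩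
  rw [hdx, mul_assoc, hb.eq, mul_assoc]

/-- Rotating `x` to the front and then to the back of the word exhibits the same cofactor. -/
theorem List.balancedDvd_prod_of_prod_rotate {l : List M}
    (h : ∀ k, (l.rotate k).prod = l.prod) {x : M} (hx : x ∈ l) : BalancedDvd x l.prod := by
  obtain ⟨a, b, rfl⟩ := List.append_of_mem hx
  refine ⟨(b ++ a).prod, ?_, ?_⟩
  · rw [← h a.length, List.rotate_append_length_eq, List.cons_append, List.prod_cons]
  · rw [← h (a.length + 1), ← List.rotate_rotate, List.rotate_append_length_eq,
      List.cons_append, List.rotate_cons_succ, List.rotate_zero, List.prod_append,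
      List.prod_singleton]

end BalancedDvd

namespace GMonoid

variable {m n : ℕ}

theorem mk'_ofList (l : List (GGen m n)) :
    (conGen (GRel m n)).mk' (FreeMonoid.ofList l) = (l.map gmk).prod := by
  induction l with
  | nil => simp
  | cons x l ih => rw [FreeMonoid.ofList_cons, map_mul, ih]; rfl

theorem prod_rotate_of_rel {w : FreeMonoid (GGen m n)}
    (hw : ∀ k, GRel m n w (FreeMonoid.ofList (w.toList.rotate k))) (k : ℕ) :
    ((w.toList.map gmk).rotate k).prod = (w.toList.map gmk).prod := by
  have h : (conGen (GRel m n)).mk' (FreeMonoid.ofList w.toList) =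
      (conGen (GRel m n)).mk' (FreeMonoid.ofList (w.toList.rotate k)) :=
    (Con.eq _).mpr (ConGen.Rel.of _ _ (hw k))
  rw [mk'_ofList, mk'_ofList] at h
  rw [← List.map_rotate, h]

theorem commute_t_u (i : Fin m) (j : Fin n) : Commute (gmk (.t i)) (gmk (.u j)) :=
  (Con.eq (conGen (GRel m n))).mpr (ConGen.Rel.of _ _ (GRel.comm i j))

def prodT (m n : ℕ) : GMonoid m n := (List.ofFn fun i => gmk (.t i)).prod

def prodU (m n : ℕ) : GMonoid m n := (List.ofFn fun j => gmk (.u j)).prod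

theorem commute_t_prodU (i : Fin m) : Commute (gmk (.t i)) (prodU m n) :=
  Commute.list_prod_right _ _ fun _ hy => by
    obtain ⟨j, rfl⟩ := List.mem_ofFn.mp hy
    exact commute_t_u i j

theorem commute_prodT_u (j : Fin n) : Commute (prodT m n) (gmk (.u j)) :=
  Commute.list_prod_left _ _ fun _ hx => by
    obtain ⟨i, rfl⟩ := List.mem_ofFn.mp hx
    exact commute_t_u i j

theorem commute_prodT_prodU : Commute (prodT m n) (prodU m n) :=
  Commute.list_prod_right _ _ fun _ hy => by
    obtain ⟨j, rfl⟩ := List.mem_ofFn.mp hy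
    exact commute_prodT_u j

theorem commute_s_prodU : Commute (gmk .s) (prodU m n) := by
  have h := prod_rotate_of_rel (w := wordU m n) GRel.cycU 1
  simp only [wordU, FreeMonoid.toList_ofList, List.map_cons, List.map_ofFn, List.rotate_cons_succ,
    List.rotate_zero, List.prod_append, List.prod_cons] at h
  exact h.symm

theorem balancedDvd_s_mul_prodT {x : GGen m n} (hx : x ∈ (wordT m n).toList) :
    BalancedDvd (gmk x) (gmk .s * prodT m n) := by
  have h := List.balancedDvd_prod_of_prod_rotate (prod_rotate_of_rel GRel.cycT)
    (List.mem_map_of_mem (f := gmk) hx)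
  simpa [wordT, prodT, List.map_ofFn, Function.comp_def] using h

theorem balancedDvd_s_mul_prodU {x : GGen m n} (hx : x ∈ (wordU m n).toList) :
    BalancedDvd (gmk x) (gmk .s * prodU m n) := by
  have h := List.balancedDvd_prod_of_prod_rotate (prod_rotate_of_rel GRel.cycU)
    (List.mem_map_of_mem (f := gmk) hx)
  simpa [wordU, prodU, List.map_ofFn, Function.comp_def] using h

theorem gDelta_eq : gDelta m n = gmk .s * prodT m n * prodU m n := by
  rw [gDelta, mk'_ofList]
  simp [List.map_ofFn, Function.comp_def, prodT, prodU, mul_assoc]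

end GMonoid

open GMonoid in
theorem stmt_18_general (m n : ℕ) :
    ∃ σ : Equiv.Perm (GGen m n), ∀ x : GGen m n, ∃ d : GMonoid m n,
      gDelta m n = gmk x * d ∧ gDelta m n = d * gmk (σ x) := by
  refine ⟨Equiv.refl _, fun x => ?_⟩
  show BalancedDvd (gmk x) (gDelta m n)
  cases x with
  | s =>
    rw [gDelta_eq]
    exact (balancedDvd_s_mul_prodT (by simp [wordT])).mul_right commute_s_prodU
  | t i =>
    rw [gDelta_eq]
    exact (balancedDvd_s_mul_prodT (by simp [wordT])).mul_right (commute_t_prodU i)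
  | u j =>
    rw [gDelta_eq, mul_assoc, commute_prodT_prodU.eq, ← mul_assoc]
    exact (balancedDvd_s_mul_prodU (by simp [wordU])).mul_right (commute_prodT_u j).symm

/-- Δ = s·t₁⋯t_m·u₁⋯u_n is a fundamental element of G⁺_{m,n}: there is a permutation σ
of the generators such that for every generator x there is d with Δ = x·d = d·σ(x). -/
theorem stmt_18 (m n : ℕ) (hm : 2 ≤ m) (hn : 2 ≤ n) :
    ∃ σ : Equiv.Perm (GGen m n), ∀ x : GGen m n, ∃ d : GMonoid m n,
      gDelta m n = gmk x * d ∧ gDelta m n = d * gmk (σ x) :=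
  stmt_18_general m n
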